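/- (Model 2g3c4b) Define vector fields on ℝ⁴ (coordinates (x,y,u,v)) by e₁ = ∂x + y∂u + 2x∂v, e₂ = ∂y + x∂u − 2y∂v, e₃ = x∂x + y∂y + 2u∂u + 2v∂v, e₄ = −y∂x + x∂y + v∂u − 4u∂v, and let S = {(x, y, xy, x² − y²) : (x,y) ∈ ℝ²}. Then: (i) each of e₁, e₂, e₃, e₄ is tangent to S; (ii) at every point of S the first two components of e₁ and e₂ are (1,0) and (0,1), so S is affinely homogeneous; (iii) with bracket [X,Y](p) = (DY)(p)(X(p)) − (DX)(p)(Y(p)) one has [e₁,e₂] = 0, [e₁,e₃] = e₁, [e₂,e₃] = e₂, [e₁,e₄] = e₂, [e₃,e₄] = 0, and the ℝ-linear span of e₁, e₂, e₃, e₄ is closed under the Lie bracket. -/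
import Mathlib


namespace Model2g3c4b

/-- Lie bracket of vector fields on `ℝ⁴`, `[X,Y](p) = DY(p)(X(p)) − DX(p)(Y(p))`. -/
noncomputable def lieBracket (X Y : (Fin 4 → ℝ) → Fin 4 → ℝ) :
    (Fin 4 → ℝ) → Fin 4 → ℝ :=
  fun p => fderiv ℝ Y p (X p) - fderiv ℝ X p (Y p)

/-- Tangency of a vector field `X` on `ℝ⁴ ∋ (x,y,u,v)` to the graph
`S = {(x, y, F(x,y), G(x,y))}`. -/
def TangentToGraph (F G : ℝ × ℝ → ℝ) (X : (Fin 4 → ℝ) → Fin 4 → ℝ) : Prop :=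
  ∀ p : ℝ × ℝ,
    X ![p.1, p.2, F p, G p] 2
        = fderiv ℝ F p (1, 0) * X ![p.1, p.2, F p, G p] 0
          + fderiv ℝ F p (0, 1) * X ![p.1, p.2, F p, G p] 1 ∧
    X ![p.1, p.2, F p, G p] 3
        = fderiv ℝ G p (1, 0) * X ![p.1, p.2, F p, G p] 0
          + fderiv ℝ G p (0, 1) * X ![p.1, p.2, F p, G p] 1

/-- `u = xy`. -/
noncomputable def F : ℝ × ℝ → ℝ := fun p => p.1 * p.2
/-- `v = x² − y²`. -/
noncomputable def G : ℝ × ℝ → ℝ := fun p => p.1 ^ 2 - p.2 ^ 2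

/-- `e₁ = ∂x + y∂u + 2x∂v`. -/
noncomputable def e₁ : (Fin 4 → ℝ) → Fin 4 → ℝ := fun p => ![1, 0, p 1, 2 * p 0]
/-- `e₂ = ∂y + x∂u − 2y∂v`. -/
noncomputable def e₂ : (Fin 4 → ℝ) → Fin 4 → ℝ := fun p => ![0, 1, p 0, -2 * p 1]
/-- `e₃ = x∂x + y∂y + 2u∂u + 2v∂v`. -/
noncomputable def e₃ : (Fin 4 → ℝ) → Fin 4 → ℝ :=
  fun p => ![p 0, p 1, 2 * p 2, 2 * p 3]
/-- `e₄ = −y∂x + x∂y + v∂u − 4u∂v`. -/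
noncomputable def e₄ : (Fin 4 → ℝ) → Fin 4 → ℝ :=
  fun p => ![-p 1, p 0, p 3, -4 * p 2]

open ContinuousLinearMap in
/-- Derivative of `e₁`. -/
noncomputable def D₁ : (Fin 4 → ℝ) →L[ℝ] (Fin 4 → ℝ) :=
  ContinuousLinearMap.pi ![0, 0, proj 1, (2:ℝ) • proj 0]

open ContinuousLinearMap in
noncomputable def D₂ : (Fin 4 → ℝ) →L[ℝ] (Fin 4 → ℝ) :=
  ContinuousLinearMap.pi ![0, 0, proj 0, (-2:ℝ) • proj 1]

open ContinuousLinearMap in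
noncomputable def D₃ : (Fin 4 → ℝ) →L[ℝ] (Fin 4 → ℝ) :=
  ContinuousLinearMap.pi ![proj 0, proj 1, (2:ℝ) • proj 2, (2:ℝ) • proj 3]

open ContinuousLinearMap in
noncomputable def D₄ : (Fin 4 → ℝ) →L[ℝ] (Fin 4 → ℝ) :=
  ContinuousLinearMap.pi ![-proj 1, proj 0, proj 3, (-4:ℝ) • proj 2]

lemma hD₁ (p : Fin 4 → ℝ) : HasFDerivAt e₁ D₁ p := by
  have h : e₁ = fun q => D₁ q + ![1, 0, 0, 0] := by
    funext q k
    fin_cases k <;> simp [e₁, D₁, Fin.isValue]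
  rw [h]
  exact D₁.hasFDerivAt.add_const _

lemma hD₂ (p : Fin 4 → ℝ) : HasFDerivAt e₂ D₂ p := by
  have h : e₂ = fun q => D₂ q + ![0, 1, 0, 0] := by
    funext q k
    fin_cases k <;> simp [e₂, D₂, Fin.isValue]
  rw [h]
  exact D₂.hasFDerivAt.add_const _

lemma hD₃ (p : Fin 4 → ℝ) : HasFDerivAt e₃ D₃ p := by
  have h : e₃ = fun q => D₃ q := by
    funext q k
    fin_cases k <;> simp [e₃, D₃, Fin.isValue]
  rw [h]
  exact D₃.hasFDerivAt
lemma hD₄ (p : Fin 4 → ℝ) : HasFDerivAt e₄ D₄ p := by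
  have h : e₄ = fun q => D₄ q := by
    funext q k
    fin_cases k <;> simp [e₄, D₄, Fin.isValue]
  rw [h]
  exact D₄.hasFDerivAt

lemma brkt (X Y : (Fin 4 → ℝ) → Fin 4 → ℝ) (DX DY : (Fin 4 → ℝ) →L[ℝ] (Fin 4 → ℝ))
    (hX : ∀ p, HasFDerivAt X DX p) (hY : ∀ p, HasFDerivAt Y DY p) :
    lieBracket X Y = fun p => DY (X p) - DX (Y p) := by
  funext p
  simp [lieBracket, (hX p).fderiv, (hY p).fderiv]

lemma hF1 (p : ℝ × ℝ) : fderiv ℝ F p (1, 0) = p.2 := by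
  have h : HasFDerivAt F
      (p.1 • (ContinuousLinearMap.snd ℝ ℝ ℝ) + p.2 • (ContinuousLinearMap.fst ℝ ℝ ℝ)) p :=
    hasFDerivAt_fst.mul hasFDerivAt_snd
  rw [h.fderiv]; simp

lemma hF2 (p : ℝ × ℝ) : fderiv ℝ F p (0, 1) = p.1 := by
  have h : HasFDerivAt F
      (p.1 • (ContinuousLinearMap.snd ℝ ℝ ℝ) + p.2 • (ContinuousLinearMap.fst ℝ ℝ ℝ)) p :=
    hasFDerivAt_fst.mul hasFDerivAt_snd
  rw [h.fderiv]; simp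

lemma hGder (p : ℝ × ℝ) : HasFDerivAt G
    ((p.1 • (ContinuousLinearMap.fst ℝ ℝ ℝ) + p.1 • (ContinuousLinearMap.fst ℝ ℝ ℝ))
      - (p.2 • (ContinuousLinearMap.snd ℝ ℝ ℝ) + p.2 • (ContinuousLinearMap.snd ℝ ℝ ℝ))) p := by
  have h : G = fun p : ℝ × ℝ => p.1 * p.1 - p.2 * p.2 := by
    funext p; simp [G]; ring
  rw [h]
  exact (hasFDerivAt_fst.mul hasFDerivAt_fst).sub (hasFDerivAt_snd.mul hasFDerivAt_snd)

lemma hG1 (p : ℝ × ℝ) : fderiv ℝ G p (1, 0) = 2 * p.1 := by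
  rw [(hGder p).fderiv]; simp; ring

lemma hG2 (p : ℝ × ℝ) : fderiv ℝ G p (0, 1) = -2 * p.2 := by
  rw [(hGder p).fderiv]; simp; ring

/-- **Model 2g3c4b:** the surface `{u = xy, v = x² − y²}` is affinely homogeneous, with
tangent vector fields `e₁, e₂, e₃, e₄` satisfying the stated bracket relations, and the
span of `e₁, e₂, e₃, e₄` is closed under the Lie bracket. -/
theorem model_2g3c4b :
    (TangentToGraph F G e₁ ∧ TangentToGraph F G e₂ ∧ TangentToGraph F G e₃ ∧
      TangentToGraph F G e₄) ∧
    (∀ p : ℝ × ℝ,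
      e₁ ![p.1, p.2, F p, G p] 0 = 1 ∧ e₁ ![p.1, p.2, F p, G p] 1 = 0 ∧
      e₂ ![p.1, p.2, F p, G p] 0 = 0 ∧ e₂ ![p.1, p.2, F p, G p] 1 = 1 ∧
      LinearIndependent ℝ
        ![((e₁ ![p.1, p.2, F p, G p] 0, e₁ ![p.1, p.2, F p, G p] 1) : ℝ × ℝ),
          ((e₂ ![p.1, p.2, F p, G p] 0, e₂ ![p.1, p.2, F p, G p] 1) : ℝ × ℝ)]) ∧
    (lieBracket e₁ e₂ = 0 ∧ lieBracket e₁ e₃ = e₁ ∧ lieBracket e₂ e₃ = e₂ ∧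
      lieBracket e₁ e₄ = e₂ ∧ lieBracket e₃ e₄ = 0) ∧
    (∀ i j : Fin 4,
      lieBracket (![e₁, e₂, e₃, e₄] i) (![e₁, e₂, e₃, e₄] j)
        ∈ Submodule.span ℝ ({e₁, e₂, e₃, e₄} : Set ((Fin 4 → ℝ) → Fin 4 → ℝ))) := by
  constructor
  · refine ⟨?_, ?_, ?_, ?_⟩ <;> intro p <;> constructor <;>
      simp [e₁, e₂, e₃, e₄, hF1, hF2, hG1, hG2, F, G, Fin.isValue] <;> ring
  constructor
  · intro p
    refine ⟨by simp [e₁], by simp [e₁], by simp [e₂], by simp [e₂], ?_⟩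
    simp only [e₁, e₂]
    rw [LinearIndependent.pair_iff]
    intro s t h
    have h1 := congrArg Prod.fst h
    have h2 := congrArg Prod.snd h
    simp at h1 h2
    constructor <;> linarith
  have b12 : lieBracket e₁ e₂ = 0 := by
    rw [brkt e₁ e₂ D₁ D₂ hD₁ hD₂]
    funext p k
    fin_cases k <;> simp [e₁, e₂, D₁, D₂] <;> ring
  have b13 : lieBracket e₁ e₃ = e₁ := by
    rw [brkt e₁ e₃ D₁ D₃ hD₁ hD₃]
    funext p k
    fin_cases k <;> simp [e₁, e₃, D₁, D₃] <;> ring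
  have b23 : lieBracket e₂ e₃ = e₂ := by
    rw [brkt e₂ e₃ D₂ D₃ hD₂ hD₃]
    funext p k
    fin_cases k <;> simp [e₂, e₃, D₂, D₃] <;> ring
  have b14 : lieBracket e₁ e₄ = e₂ := by
    rw [brkt e₁ e₄ D₁ D₄ hD₁ hD₄]
    funext p k
    fin_cases k <;> simp [e₁, e₂, e₄, D₁, D₄] <;> ring
  have b34 : lieBracket e₃ e₄ = 0 := by
    rw [brkt e₃ e₄ D₃ D₄ hD₃ hD₄]
    funext p k
    fin_cases k <;> simp [e₃, e₄, D₃, D₄] <;> ring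
  have b24 : lieBracket e₂ e₄ = -e₁ := by
    rw [brkt e₂ e₄ D₂ D₄ hD₂ hD₄]
    funext p k
    fin_cases k <;> simp [e₁, e₂, e₄, D₂, D₄] <;> ring
  have anti : ∀ (X Y : (Fin 4 → ℝ) → Fin 4 → ℝ) (DX DY : (Fin 4 → ℝ) →L[ℝ] (Fin 4 → ℝ)), (∀ p, HasFDerivAt X DX p) → (∀ p, HasFDerivAt Y DY p) →
      lieBracket Y X = -lieBracket X Y := by
    intro X Y DX DY hX hY
    rw [brkt X Y DX DY hX hY, brkt Y X DY DX hY hX]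
    funext p
    simp
  have self : ∀ (X : (Fin 4 → ℝ) → Fin 4 → ℝ) (DX : (Fin 4 → ℝ) →L[ℝ] (Fin 4 → ℝ)), (∀ p : Fin 4 → ℝ, HasFDerivAt X DX p) → lieBracket X X = 0 := by
    intro X DX hX
    rw [brkt X X DX DX hX hX]
    funext p
    simp
  refine ⟨⟨b12, b13, b23, b14, b34⟩, ?_⟩
  intro i j
  have m1 : e₁ ∈ Submodule.span ℝ ({e₁, e₂, e₃, e₄} : Set ((Fin 4 → ℝ) → Fin 4 → ℝ)) :=
    Submodule.subset_span (by simp)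
  have m2 : e₂ ∈ Submodule.span ℝ ({e₁, e₂, e₃, e₄} : Set ((Fin 4 → ℝ) → Fin 4 → ℝ)) :=
    Submodule.subset_span (by simp)
  have m0 : (0 : (Fin 4 → ℝ) → Fin 4 → ℝ) ∈
      Submodule.span ℝ ({e₁, e₂, e₃, e₄} : Set ((Fin 4 → ℝ) → Fin 4 → ℝ)) :=
    Submodule.zero_mem _
  fin_cases i <;> fin_cases j
  · show lieBracket e₁ e₁ ∈ _; rw [self _ _ hD₁]; exact m0
  · show lieBracket e₁ e₂ ∈ _; rw [b12]; exact m0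
  · show lieBracket e₁ e₃ ∈ _; rw [b13]; exact m1
  · show lieBracket e₁ e₄ ∈ _; rw [b14]; exact m2
  · show lieBracket e₂ e₁ ∈ _; rw [anti e₁ e₂ D₁ D₂ hD₁ hD₂, b12]; simpa using m0
  · show lieBracket e₂ e₂ ∈ _; rw [self _ _ hD₂]; exact m0
  · show lieBracket e₂ e₃ ∈ _; rw [b23]; exact m2
  · show lieBracket e₂ e₄ ∈ _; rw [b24]; exact Submodule.neg_mem _ m1
  · show lieBracket e₃ e₁ ∈ _
    rw [anti e₁ e₃ D₁ D₃ hD₁ hD₃, b13]; exact Submodule.neg_mem _ m1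
  · show lieBracket e₃ e₂ ∈ _
    rw [anti e₂ e₃ D₂ D₃ hD₂ hD₃, b23]; exact Submodule.neg_mem _ m2
  · show lieBracket e₃ e₃ ∈ _; rw [self _ _ hD₃]; exact m0
  · show lieBracket e₃ e₄ ∈ _; rw [b34]; exact m0
  · show lieBracket e₄ e₁ ∈ _
    rw [anti e₁ e₄ D₁ D₄ hD₁ hD₄, b14]; exact Submodule.neg_mem _ m2
  · show lieBracket e₄ e₂ ∈ _; rw [anti e₂ e₄ D₂ D₄ hD₂ hD₄, b24]; simpa using m1
  · show lieBracket e₄ e₃ ∈ _; rw [anti e₃ e₄ D₃ D₄ hD₃ hD₄, b34]; simpa using m0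
  · show lieBracket e₄ e₄ ∈ _; rw [self _ _ hD₄]; exact m0

end Model2g3c4b
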